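/- arXiv:2210.14021 — 5 statements merged into one kernel-verified Lean document; each statement's English description precedes it below -/
import Mathlib

section
/- Cone membership for the weighted Group Lasso: let a ∈ (0,1) and λ > 0, let β̂ be any global minimizer over ℝ^p of β ↦ ℓ(β) + λ Σ_{k=1}^r ‖W_k β_k‖₂, and suppose |W⁻¹Xᵀε|_∞ ≤ aλ (i.e. |x_jᵀε| ≤ aλ·w_j for all j). Then β̂ − β̊ belongs to the cone C_{a,W}. -/
/-!
Compare the objective at `β̂` with its value at `β̊`. Writing `v = β̂ − β̊`, the loss difference is
`‖Xv‖²/2 − εᵀXv ≥ −Σ_j (x_jᵀε) v_j ≥ −aλ |Wv|₁`, so minimality gives the basic inequality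
`Σ_k ‖W_k β̂_k‖ ≤ Σ_k ‖W_k β̊_k‖ + a |Wv|₁`. Off the support `β̂_k = v_k` and `β̊_k = 0`, while on
the support `‖W_k β̂_k‖ ≥ ‖W_k β̊_k‖ − ‖W_k v_k‖`; substituting gives the cone inequality.
-/

open scoped BigOperators

/-- Weighted group ℓ₂ norm ‖W_k β_k‖₂ of the subvector of `β` on group `G`. -/
noncomputable def gnorm {p : ℕ} (w β : Fin p → ℝ) (G : Finset (Fin p)) : ℝ :=
  Real.sqrt (∑ j ∈ G, (w j * β j) ^ 2)

/-- Quadratic loss ℓ(β) = ‖Xβ‖₂²/2 − yᵀXβ. -/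
noncomputable def qloss {n p : ℕ} (X : Matrix (Fin n) (Fin p) ℝ) (y : Fin n → ℝ)
    (β : Fin p → ℝ) : ℝ :=
  (∑ i, (X.mulVec β i) ^ 2) / 2 - ∑ i, y i * X.mulVec β i

/-- The cone C_{a,W}:
Σ_{k∈S̄} ‖W_k v_k‖ ≤ Σ_{k∈S} ‖W_k v_k‖ + a |Wv|₁. -/
def inCone {p r : ℕ} (w : Fin p → ℝ) (G : Fin r → Finset (Fin p))
    (S : Finset (Fin r)) (a : ℝ) (v : Fin p → ℝ) : Prop :=
  ∑ k ∈ Sᶜ, gnorm w v (G k) ≤ ∑ k ∈ S, gnorm w v (G k) + a * ∑ j, |w j * v j|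

open Matrix

section GroupNorm

variable {p : ℕ} (w : Fin p → ℝ)

lemma gnorm_eq_norm (β : Fin p → ℝ) (G : Finset (Fin p)) :
    gnorm w β G = ‖(WithLp.toLp 2 fun j : G => w j * β j : EuclideanSpace ℝ G)‖ := by
  simp only [gnorm, EuclideanSpace.norm_eq, Real.norm_eq_abs, sq_abs]
  rw [Finset.sum_coe_sort G fun j => (w j * β j) ^ 2]

lemma gnorm_le_gnorm_add_gnorm_sub (β γ : Fin p → ℝ) (G : Finset (Fin p)) :
    gnorm w β G ≤ gnorm w γ G + gnorm w (γ - β) G := by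
  simp only [gnorm_eq_norm, Pi.sub_apply, mul_sub]
  exact norm_le_insert _ _

lemma gnorm_congr {β γ : Fin p → ℝ} {G : Finset (Fin p)} (h : ∀ j ∈ G, β j = γ j) :
    gnorm w β G = gnorm w γ G := by
  unfold gnorm
  rw [Finset.sum_congr rfl fun j hj => by rw [h j hj]]

lemma gnorm_eq_zero {β : Fin p → ℝ} {G : Finset (Fin p)} (h : ∀ j ∈ G, β j = 0) :
    gnorm w β G = 0 := by
  rw [gnorm_congr w (γ := 0) h]
  simp [gnorm]

lemma inCone_sub_of_sum_gnorm_le {r : ℕ} {G : Fin r → Finset (Fin p)} {S : Finset (Fin r)}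
    {a : ℝ} {β βo : Fin p → ℝ} (hβo : ∀ k ∉ S, ∀ j ∈ G k, βo j = 0)
    (h : ∑ k, gnorm w β (G k) ≤ ∑ k, gnorm w βo (G k) + a * ∑ j, |w j * (β - βo) j|) :
    inCone w G S a (β - βo) := by
  have hout : ∀ k ∈ Sᶜ, gnorm w β (G k) = gnorm w (β - βo) (G k) := fun k hk =>
    gnorm_congr w fun j hj => by simp [hβo k (Finset.mem_compl.mp hk) j hj]
  have hβo_sum : ∑ k, gnorm w βo (G k) = ∑ k ∈ S, gnorm w βo (G k) := by
    rw [← Finset.sum_add_sum_compl S,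
      Finset.sum_eq_zero fun k hk => gnorm_eq_zero w (hβo k (Finset.mem_compl.mp hk)), add_zero]
  have hin : ∑ k ∈ S, gnorm w βo (G k) ≤
      ∑ k ∈ S, gnorm w β (G k) + ∑ k ∈ S, gnorm w (β - βo) (G k) := by
    rw [← Finset.sum_add_distrib]
    exact Finset.sum_le_sum fun k _ => gnorm_le_gnorm_add_gnorm_sub w βo β (G k)
  rw [← Finset.sum_add_sum_compl S, Finset.sum_congr rfl hout, hβo_sum] at h
  unfold inCone
  linarith

end GroupNorm

lemma qloss_sub_qloss {n p : ℕ} (X : Matrix (Fin n) (Fin p) ℝ) (βo β : Fin p → ℝ)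
    (ε : Fin n → ℝ) :
    qloss X (X *ᵥ βo + ε) β - qloss X (X *ᵥ βo + ε) βo =
      (∑ i, (X *ᵥ (β - βo)) i ^ 2) / 2 - ε ⬝ᵥ X *ᵥ (β - βo) := by
  simp only [qloss, mulVec_sub, dotProduct, Pi.add_apply, Pi.sub_apply, Finset.sum_div,
    ← Finset.sum_sub_distrib]
  exact Finset.sum_congr rfl fun i _ => by ring

lemma dotProduct_le_mul_sum_abs {ι : Type*} [Fintype ι] {c v w : ι → ℝ} {t : ℝ}
    (hw : ∀ j, 0 ≤ w j) (hc : ∀ j, |c j| ≤ t * w j) :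
    c ⬝ᵥ v ≤ t * ∑ j, |w j * v j| := by
  rw [dotProduct, Finset.mul_sum]
  refine Finset.sum_le_sum fun j _ => ?_
  calc c j * v j ≤ |c j| * |v j| := (le_abs_self _).trans (abs_mul _ _).le
    _ ≤ t * w j * |v j| := mul_le_mul_of_nonneg_right (hc j) (abs_nonneg _)
    _ = t * |w j * v j| := by rw [abs_mul, abs_of_nonneg (hw j), mul_assoc]

lemma sum_gnorm_le_of_le_objective {n p r : ℕ} (X : Matrix (Fin n) (Fin p) ℝ)
    (G : Fin r → Finset (Fin p)) {w : Fin p → ℝ} (hw : ∀ j, 0 ≤ w j) {βo β : Fin p → ℝ}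
    {ε : Fin n → ℝ} {a lam : ℝ} (hlam : 0 < lam)
    (hnoise : ∀ j, |∑ i, X i j * ε i| ≤ a * lam * w j)
    (hle : qloss X (X *ᵥ βo + ε) β + lam * ∑ k, gnorm w β (G k) ≤
      qloss X (X *ᵥ βo + ε) βo + lam * ∑ k, gnorm w βo (G k)) :
    ∑ k, gnorm w β (G k) ≤ ∑ k, gnorm w βo (G k) + a * ∑ j, |w j * (β - βo) j| := by
  have hloss : -(lam * (a * ∑ j, |w j * (β - βo) j|)) ≤
      qloss X (X *ᵥ βo + ε) β - qloss X (X *ᵥ βo + ε) βo := by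
    have hsq : 0 ≤ (∑ i, (X *ᵥ (β - βo)) i ^ 2) / 2 := by positivity
    have hnoise' : ε ⬝ᵥ X *ᵥ (β - βo) ≤ a * lam * ∑ j, |w j * (β - βo) j| := by
      rw [dotProduct_mulVec, ← mulVec_transpose]
      exact dotProduct_le_mul_sum_abs hw hnoise
    rw [qloss_sub_qloss]
    linarith
  refine le_of_mul_le_mul_left ?_ hlam
  linarith

theorem stmt1_general {n p r : ℕ}
    (X : Matrix (Fin n) (Fin p) ℝ)
    (G : Fin r → Finset (Fin p))
    (w : Fin p → ℝ) (hw : ∀ j, 0 < w j)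
    (βo : Fin p → ℝ) (ε : Fin n → ℝ) (y : Fin n → ℝ)
    (hy : y = X.mulVec βo + ε)
    (S : Finset (Fin r)) (hS : ∀ k, k ∈ S ↔ ∃ j ∈ G k, βo j ≠ 0)
    (a : ℝ)
    (lam : ℝ) (hlam : 0 < lam)
    (hnoise : ∀ j, |∑ i, X i j * ε i| ≤ a * lam * w j)
    (βh : Fin p → ℝ)
    (hmin : ∀ β : Fin p → ℝ,
      qloss X y βh + lam * ∑ k, gnorm w βh (G k) ≤
        qloss X y β + lam * ∑ k, gnorm w β (G k)) :
    inCone w G S a (βh - βo) := by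
  subst hy
  have hβo : ∀ k ∉ S, ∀ j ∈ G k, βo j = 0 := fun k hk j hj => by
    by_contra hne
    exact hk ((hS k).mpr ⟨j, hj, hne⟩)
  exact inCone_sub_of_sum_gnorm_le w hβo
    (sum_gnorm_le_of_le_objective X G (fun j => (hw j).le) hlam hnoise (hmin βo))

/-- Cone membership for the weighted Group Lasso: if |W⁻¹Xᵀε|_∞ ≤ aλ then any global
minimizer β̂ of the Group Lasso objective satisfies β̂ − β̊ ∈ C_{a,W}. -/
theorem stmt1 {n p r : ℕ} (hn : 0 < n) (hp : 0 < p) (hr : 0 < r)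
    (X : Matrix (Fin n) (Fin p) ℝ)
    (G : Fin r → Finset (Fin p))
    (hGne : ∀ k, (G k).Nonempty)
    (hGdisj : ∀ k₁ k₂, k₁ ≠ k₂ → Disjoint (G k₁) (G k₂))
    (hGcover : ∀ j, ∃ k, j ∈ G k)
    (w : Fin p → ℝ) (hw : ∀ j, 0 < w j)
    (βo : Fin p → ℝ) (ε : Fin n → ℝ) (y : Fin n → ℝ)
    (hy : y = X.mulVec βo + ε)
    (S : Finset (Fin r)) (hS : ∀ k, k ∈ S ↔ ∃ j ∈ G k, βo j ≠ 0)
    (a : ℝ) (ha : a ∈ Set.Ioo (0 : ℝ) 1)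
    (lam : ℝ) (hlam : 0 < lam)
    (hnoise : ∀ j, |∑ i, X i j * ε i| ≤ a * lam * w j)
    (βh : Fin p → ℝ)
    (hmin : ∀ β : Fin p → ℝ,
      qloss X y βh + lam * ∑ k, gnorm w βh (G k) ≤
        qloss X y β + lam * ∑ k, gnorm w β (G k)) :
    inCone w G S a (βh - βo) :=
  stmt1_general X G w hw βo ε y hy S hS a lam hlam hnoise βh hmin
end

section
/- Proposition 1 (bound part): suppose the columns x_1,…,x_p of X are pairwise orthogonal and nonzero, the weights are w_j = ‖x_j‖₂^q for a fixed q ∈ ℝ, and the cone C_{a,W} contains a nonzero vector. Then for each a ∈ (0,1), x_W²·ζ_{a,W}^{−2} ≤ x_m^{−2}·(x_M/x_m)^{max(0, |2q−3|−1)}. -/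
open scoped BigOperators

/-- Euclidean norm of column `j` of `X`. -/
noncomputable def colnorm {n p : ℕ} (X : Matrix (Fin n) (Fin p) ℝ) (j : Fin p) : ℝ :=
  Real.sqrt (∑ i, X i j ^ 2)

/-- The ℓ∞ norm of a vector. -/
noncomputable def linf {p : ℕ} (v : Fin p → ℝ) : ℝ := ⨆ j, |v j|

/-- The cone invertibility factor ζ_{a,W}. -/
noncomputable def cif {n p r : ℕ} (X : Matrix (Fin n) (Fin p) ℝ) (w : Fin p → ℝ)
    (G : Fin r → Finset (Fin p)) (S : Finset (Fin r)) (a : ℝ) : ℝ :=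
  sInf ((fun v => linf (fun j => (X.transpose.mulVec (X.mulVec v)) j / w j) / linf v) ''
    {v | inCone w G S a v ∧ v ≠ 0})

lemma sq_rpow_aux (x c : ℝ) (hx : 0 ≤ x) : (x ^ c) ^ (2:ℕ) = x ^ (2*c) := by
  rw [← Real.rpow_natCast (x ^ c) 2, ← Real.rpow_mul hx]
  norm_num [mul_comm]

/-- Proposition 1 (bound part): for an orthogonal design with weights w_j = ‖x_j‖^q,
x_W² ζ_{a,W}⁻² ≤ x_m⁻² (x_M/x_m)^{max(0,|2q−3|−1)}. -/
theorem stmt6 {n p r : ℕ} (hn : 0 < n) (hp : 0 < p) (hr : 0 < r)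
    (X : Matrix (Fin n) (Fin p) ℝ)
    (horth : ∀ j₁ j₂ : Fin p, j₁ ≠ j₂ → ∑ i, X i j₁ * X i j₂ = 0)
    (hX : ∀ j, ∃ i, X i j ≠ 0)
    (G : Fin r → Finset (Fin p))
    (hGne : ∀ k, (G k).Nonempty)
    (hGdisj : ∀ k₁ k₂, k₁ ≠ k₂ → Disjoint (G k₁) (G k₂))
    (hGcover : ∀ j, ∃ k, j ∈ G k)
    (q : ℝ) (w : Fin p → ℝ) (hw : ∀ j, w j = colnorm X j ^ q)
    (βo : Fin p → ℝ)
    (S : Finset (Fin r)) (hS : ∀ k, k ∈ S ↔ ∃ j ∈ G k, βo j ≠ 0)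
    (a : ℝ) (ha : a ∈ Set.Ioo (0 : ℝ) 1)
    (hcone : ∃ v : Fin p → ℝ, inCone w G S a v ∧ v ≠ 0)
    (xW xm xM : ℝ)
    (hxW : xW = ⨆ j, colnorm X j / w j)
    (hxm : xm = ⨅ j, colnorm X j)
    (hxM : xM = ⨆ j, colnorm X j) :
    xW ^ 2 * ((cif X w G S a) ^ 2)⁻¹ ≤
      (xm ^ 2)⁻¹ * (xM / xm) ^ max (0 : ℝ) (|2 * q - 3| - 1) := by
  haveI : Nonempty (Fin p) := ⟨⟨0, hp⟩⟩
  set L : Fin p → ℝ := colnorm X with hLdef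
  have hs : ∀ j, 0 < ∑ i, X i j ^ 2 := by
    intro j
    obtain ⟨i, hi⟩ := hX j
    exact Finset.sum_pos' (fun i _ => sq_nonneg _) ⟨i, Finset.mem_univ i, by positivity⟩
  have hLpos : ∀ j, 0 < L j := fun j => Real.sqrt_pos.mpr (hs j)
  have hL2 : ∀ j, L j ^ (2:ℝ) = ∑ i, X i j ^ 2 := by
    intro j
    rw [show (2:ℝ) = ((2:ℕ):ℝ) by norm_num, Real.rpow_natCast]
    exact Real.sq_sqrt (le_of_lt (hs j))
  have hwpos : ∀ j, 0 < w j := fun j => by rw [hw j]; exact Real.rpow_pos_of_pos (hLpos j) q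
  -- matrix identity
  have key : ∀ (v : Fin p → ℝ) (j : Fin p),
      (X.transpose.mulVec (X.mulVec v)) j = (∑ i, X i j ^ 2) * v j := by
    intro v j
    simp only [Matrix.mulVec, dotProduct, Matrix.transpose_apply]
    have h1 : ∀ i : Fin n, X i j * ∑ l, X i l * v l = ∑ l, X i j * X i l * v l := by
      intro i
      rw [Finset.mul_sum]
      exact Finset.sum_congr rfl fun l _ => by ring
    simp_rw [h1]
    rw [Finset.sum_comm, Finset.sum_eq_single j]
    · rw [← Finset.sum_mul]
      congr 1
      exact Finset.sum_congr rfl fun i _ => (pow_two (X i j)).symm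
    · intro l _ hlj
      rw [← Finset.sum_mul, horth j l (fun h => hlj h.symm), zero_mul]
    · intro h
      exact absurd (Finset.mem_univ j) h
  -- the weighted entries
  have hc : ∀ (v : Fin p → ℝ) (j : Fin p),
      (X.transpose.mulVec (X.mulVec v)) j / w j = L j ^ (2 - q) * v j := by
    intro v j
    rw [key, hw j, ← hL2 j, Real.rpow_sub (hLpos j), mul_div_right_comm]
  -- bounded ranges
  have bddA : ∀ f : Fin p → ℝ, BddAbove (Set.range f) := fun f =>
    Set.Finite.bddAbove (Set.finite_range f)
  have bddB : ∀ f : Fin p → ℝ, BddBelow (Set.range f) := fun f =>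
    Set.Finite.bddBelow (Set.finite_range f)
  -- basic bounds on xm xM
  have hxmle : ∀ j, xm ≤ L j := fun j => hxm ▸ ciInf_le (bddB L) j
  have hxMge : ∀ j, L j ≤ xM := fun j => hxM ▸ le_ciSup (bddA L) j
  have hxmpos : 0 < xm := by
    obtain ⟨j0, hj0⟩ := Finite.exists_min L
    rw [hxm]
    exact lt_of_lt_of_le (hLpos j0) (le_ciInf hj0)
  have hxMpos : 0 < xM := lt_of_lt_of_le hxmpos (le_trans (hxmle (Classical.arbitrary _))
    (hxMge (Classical.arbitrary _)))
  have hmM : xm ≤ xM := le_trans (hxmle (Classical.arbitrary _)) (hxMge (Classical.arbitrary _))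
  -- the lower bound m for the cif
  set m : ℝ := ⨅ j, L j ^ (2 - q) with hmdef
  have hm_le : ∀ j, m ≤ L j ^ (2 - q) := fun j => ciInf_le (bddB _) j
  have hmpos : 0 < m := by
    obtain ⟨j0, hj0⟩ := Finite.exists_min (fun j => L j ^ (2 - q))
    exact lt_of_lt_of_le (Real.rpow_pos_of_pos (hLpos j0) _) (le_ciInf hj0)
  have hzeta : m ≤ cif X w G S a := by
    apply le_csInf
    · obtain ⟨v, hv⟩ := hcone
      exact ⟨_, Set.mem_image_of_mem _ hv⟩
    · rintro b ⟨v, ⟨hv, hv0⟩, rfl⟩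
      have hlv : 0 < linf v := by
        obtain ⟨j1, hj1⟩ := Function.ne_iff.mp hv0
        exact lt_of_lt_of_le (abs_pos.mpr hj1) (le_ciSup (bddA fun j => |v j|) j1)
      rw [le_div_iff₀ hlv]
      obtain ⟨j0, hj0⟩ := Finite.exists_max fun j => |v j|
      have h1 : linf v ≤ |v j0| := ciSup_le hj0
      calc m * linf v ≤ (L j0 ^ (2 - q)) * |v j0| :=
            mul_le_mul (hm_le j0) h1 (le_of_lt hlv)
              (le_of_lt (Real.rpow_pos_of_pos (hLpos j0) _))
        _ = |(L j0 ^ (2 - q)) * v j0| := by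
            rw [abs_mul, abs_of_nonneg (le_of_lt (Real.rpow_pos_of_pos (hLpos j0) _))]
        _ = |(X.transpose.mulVec (X.mulVec v)) j0 / w j0| := by rw [hc v j0]
        _ ≤ linf fun j => (X.transpose.mulVec (X.mulVec v)) j / w j :=
            le_ciSup (bddA fun j => |(X.transpose.mulVec (X.mulVec v)) j / w j|) j0
  -- reduce to bound with m
  have hzpos : 0 < cif X w G S a := lt_of_lt_of_le hmpos hzeta
  have step1 : xW ^ 2 * ((cif X w G S a) ^ 2)⁻¹ ≤ xW ^ 2 * (m ^ 2)⁻¹ := by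
    apply mul_le_mul_of_nonneg_left _ (sq_nonneg xW)
    apply inv_anti₀ (pow_pos hmpos 2)
    exact pow_le_pow_left₀ (le_of_lt hmpos) hzeta 2
  refine le_trans step1 ?_
  -- rewrite xW
  have hxW' : xW = ⨆ j, L j ^ (1 - q) := by
    rw [hxW]
    congr 1
    funext j
    rw [hw j, Real.rpow_sub (hLpos j), Real.rpow_one]
  have hxWnn : 0 ≤ xW := by
    rw [hxW']
    exact le_trans (le_of_lt (Real.rpow_pos_of_pos (hLpos (Classical.arbitrary _)) (1 - q)))
      (le_ciSup (f := fun j => L j ^ (1 - q)) (bddA _) (Classical.arbitrary _))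
  -- case analysis
  have habs : ∀ A B : ℝ, 0 ≤ xW → xW ≤ A → 0 < B → B ≤ m →
      xW ^ 2 * (m ^ 2)⁻¹ ≤ A ^ 2 * (B ^ 2)⁻¹ := by
    intro A B h0 hA hB hBm
    apply mul_le_mul (pow_le_pow_left₀ h0 hA 2)
      (inv_anti₀ (pow_pos hB 2) (pow_le_pow_left₀ (le_of_lt hB) hBm 2))
      (inv_nonneg.mpr (sq_nonneg m)) (sq_nonneg A)
  rcases le_total q 1 with hq1 | hq1
  · -- q ≤ 1 : xW ≤ xM^(1-q), m ≥ xm^(2-q)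
    have hA : xW ≤ xM ^ (1 - q) := by
      rw [hxW']
      exact ciSup_le fun j => Real.rpow_le_rpow (le_of_lt (hLpos j)) (hxMge j) (by linarith)
    have hB : xm ^ (2 - q) ≤ m := le_ciInf fun j =>
      Real.rpow_le_rpow (le_of_lt hxmpos) (hxmle j) (by linarith)
    refine le_trans (habs _ _ hxWnn hA (Real.rpow_pos_of_pos hxmpos _) hB) ?_
    have hE : max (0:ℝ) (|2 * q - 3| - 1) = 2 - 2*q := by
      rw [abs_of_nonpos (by linarith)]
      rw [max_eq_right (by linarith)]
      ring
    rw [hE]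
    apply le_of_eq
    rw [sq_rpow_aux _ _ (le_of_lt hxMpos), sq_rpow_aux _ _ (le_of_lt hxmpos),
      Real.div_rpow (le_of_lt hxMpos) (le_of_lt hxmpos),
      ← Real.rpow_natCast xm 2]
    rw [← Real.rpow_neg (le_of_lt hxmpos), ← Real.rpow_neg (le_of_lt hxmpos),
      div_eq_mul_inv (xM ^ (2-2*q)), ← Real.rpow_neg (le_of_lt hxmpos)]
    rw [mul_comm ((xm:ℝ) ^ (-((2:ℕ):ℝ))), mul_assoc, ← Real.rpow_add hxmpos]
    congr 1
    · congr 1; ring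
    · congr 1; push_cast; ring
  · rcases le_total q 2 with hq2 | hq2
    · -- 1 ≤ q ≤ 2 : xW ≤ xm^(1-q), m ≥ xm^(2-q)
      have hA : xW ≤ xm ^ (1 - q) := by
        rw [hxW']
        exact ciSup_le fun j =>
          Real.rpow_le_rpow_of_nonpos hxmpos (hxmle j) (by linarith)
      have hB : xm ^ (2 - q) ≤ m := le_ciInf fun j =>
        Real.rpow_le_rpow (le_of_lt hxmpos) (hxmle j) (by linarith)
      refine le_trans (habs _ _ hxWnn hA (Real.rpow_pos_of_pos hxmpos _) hB) ?_
      have h1 : (xm ^ (1-q)) ^ (2:ℕ) * ((xm ^ (2-q)) ^ (2:ℕ))⁻¹ = (xm ^ 2)⁻¹ := by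
        rw [sq_rpow_aux _ _ (le_of_lt hxmpos), sq_rpow_aux _ _ (le_of_lt hxmpos),
          ← Real.rpow_natCast xm 2, ← Real.rpow_neg (le_of_lt hxmpos),
          ← Real.rpow_neg (le_of_lt hxmpos), ← Real.rpow_add hxmpos]
        congr 1
        push_cast; ring
      rw [h1]
      nth_rewrite 1 [← mul_one ((xm ^ 2)⁻¹)]
      apply mul_le_mul_of_nonneg_left _ (inv_nonneg.mpr (sq_nonneg xm))
      exact Real.one_le_rpow ((one_le_div hxmpos).mpr hmM) (le_max_left _ _)
    · -- q ≥ 2 : xW ≤ xm^(1-q), m ≥ xM^(2-q)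
      have hA : xW ≤ xm ^ (1 - q) := by
        rw [hxW']
        exact ciSup_le fun j =>
          Real.rpow_le_rpow_of_nonpos hxmpos (hxmle j) (by linarith)
      have hB : xM ^ (2 - q) ≤ m := le_ciInf fun j =>
        Real.rpow_le_rpow_of_nonpos (hLpos j) (hxMge j) (by linarith)
      refine le_trans (habs _ _ hxWnn hA (Real.rpow_pos_of_pos hxMpos _) hB) ?_
      have hE : max (0:ℝ) (|2 * q - 3| - 1) = 2*q - 4 := by
        rw [abs_of_nonneg (by linarith), max_eq_right (by linarith)]
        ring
      rw [hE]
      apply le_of_eq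
      rw [sq_rpow_aux _ _ (le_of_lt hxmpos), sq_rpow_aux _ _ (le_of_lt hxMpos),
        Real.div_rpow (le_of_lt hxMpos) (le_of_lt hxmpos),
        ← Real.rpow_natCast xm 2]
      rw [← Real.rpow_neg (le_of_lt hxMpos), ← Real.rpow_neg (le_of_lt hxmpos),
        div_eq_mul_inv (xM ^ (2*q-4)), ← Real.rpow_neg (le_of_lt hxmpos)]
      rw [mul_comm ((xm:ℝ) ^ (-((2:ℕ):ℝ))), mul_assoc, ← Real.rpow_add hxmpos]
      rw [mul_comm (xm ^ (2*(1-q)))]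
      congr 1
      · congr 1; ring
      · congr 1; push_cast; ring
end

section
/- Stirling-number tail bound via Poisson moments: for every integer m ≥ 1 and every real c > 0, Σ_{k=1}^{m−1} S(m, m−k)·exp(−kc) ≤ exp(m²·exp(−c)/2) − 1; equivalently, Σ_{j=1}^{m} S(m, j)·exp(jc) ≤ exp(mc)·exp(m²·exp(−c)/2). -/
open scoped BigOperators

/-- Stirling numbers of the second kind: `stirling2 m j` is the number of partitions of a
set of `m` elements into exactly `j` nonempty blocks. -/
def stirling2 : ℕ → ℕ → ℕ
  | 0, 0 => 1
  | 0, _ + 1 => 0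
  | _ + 1, 0 => 0
  | m + 1, j + 1 => (j + 1) * stirling2 m (j + 1) + stirling2 m j


lemma stirling2_eq_zero : ∀ m j : ℕ, m < j → stirling2 m j = 0
  | 0, 0, h => absurd h (lt_irrefl 0)
  | 0, j + 1, _ => rfl
  | m + 1, 0, h => absurd h (Nat.not_lt_zero _).elim
  | m + 1, j + 1, h => by
      have h1 : m < j + 1 := by omega
      have h2 : m < j := by omega
      simp [stirling2, stirling2_eq_zero m (j+1) h1, stirling2_eq_zero m j h2]

lemma stirling2_self : ∀ m : ℕ, stirling2 m m = 1
  | 0 => rfl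
  | m + 1 => by
      simp [stirling2, stirling2_eq_zero m (m+1) (Nat.lt_succ_self m), stirling2_self m]

lemma pow_aux : ∀ (k a b : ℕ), a ^ k + k * b * a ^ (k - 1) ≤ (a + b) ^ k
  | 0, a, b => by simp
  | 1, a, b => by simp
  | (k+2), a, b => by
      have ih := pow_aux (k+1) a b
      have : (a + b) ^ (k + 2) = (a + b) * (a + b) ^ (k+1) := by ring
      rw [this]
      calc a ^ (k+2) + (k+2) * b * a ^ (k+1)
          ≤ (a+b) * (a ^ (k+1) + (k+1) * b * a ^ k) := by
            have : a ^ (k+2) = a * a ^ (k+1) := by ring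
            have h2 : a * ((k+1) * b * a ^ k) = (k+1) * b * a ^ (k+1) := by ring
            nlinarith [Nat.zero_le ((k+1) * b * b * a ^ k), Nat.zero_le (b * a ^ (k+1))]
        _ ≤ (a+b) * (a + b) ^ (k+1) := Nat.mul_le_mul_left _ (by simpa using ih)

lemma stirling2_bound : ∀ m j : ℕ, j ≤ m →
    2 ^ (m - j) * (m - j).factorial * stirling2 m j ≤ m ^ (2 * (m - j))
  | 0, j, h => by interval_cases j; simp [stirling2]
  | m + 1, 0, h => by simp [stirling2]
  | m + 1, j + 1, h => by
      rcases eq_or_lt_of_le h with heq | hlt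
      · rw [← heq]; simp [stirling2_self]
      · -- j + 1 ≤ m, so k := m - j ≥ 1
        have hj : j + 1 ≤ m := Nat.lt_succ_iff.mp hlt
        have hk : 1 ≤ m - j := by omega
        set k := m - j with hkdef
        have hk1 : m + 1 - (j + 1) = k := by omega
        have hk2 : m - (j + 1) = k - 1 := by omega
        have ih1 := stirling2_bound m (j + 1) hj
        have ih2 := stirling2_bound m j (by omega)
        rw [hk2] at ih1
        rw [hk1]
        rw [show stirling2 (m+1) (j+1) = (j+1) * stirling2 m (j+1) + stirling2 m j from rfl]
        have hfac : k.factorial = k * (k - 1).factorial := by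
          conv_lhs => rw [show k = (k-1) + 1 by omega]
          rw [Nat.factorial_succ]; congr 1; omega
        have hpow2 : (2:ℕ) ^ k = 2 * 2 ^ (k - 1) := by
          conv_lhs => rw [show k = (k-1) + 1 by omega]; rw [pow_succ]
          ring
        calc 2 ^ k * k.factorial * ((j+1) * stirling2 m (j+1) + stirling2 m j)
            = 2 * k * (j+1) * (2 ^ (k-1) * (k-1).factorial * stirling2 m (j+1))
              + 2 ^ k * k.factorial * stirling2 m j := by rw [hfac, hpow2]; ring
          _ ≤ 2 * k * (j+1) * m ^ (2 * (k-1)) + m ^ (2 * k) :=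
              Nat.add_le_add (Nat.mul_le_mul_left _ ih1) ih2
          _ ≤ k * (2*m+1) * m ^ (2 * (k-1)) + m ^ (2*k) := by
              have : 2 * k * (j + 1) ≤ k * (2*m+1) := by nlinarith [hj]
              exact Nat.add_le_add_right (Nat.mul_le_mul_right _ this) _
          _ ≤ (m^2) ^ k + k * (2*m+1) * (m^2) ^ (k - 1) := by
              rw [← pow_mul, ← pow_mul]
              omega
          _ ≤ (m^2 + (2*m+1)) ^ k := pow_aux k (m^2) (2*m+1)
          _ = (m+1) ^ (2 * k) := by rw [show m^2 + (2*m+1) = (m+1)^2 by ring, ← pow_mul,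
              Nat.mul_comm]

/-- Stirling-number tail bound via Poisson moments: for m ≥ 1 and c > 0,
Σ_{k=1}^{m−1} S(m, m−k) e^{−kc} ≤ e^{m² e^{−c}/2} − 1; equivalently,
Σ_{j=1}^{m} S(m, j) e^{jc} ≤ e^{mc} e^{m² e^{−c}/2}. -/
theorem stmt14 (m : ℕ) (hm : 1 ≤ m) (c : ℝ) (hc : 0 < c) :
    (∑ k ∈ Finset.Icc 1 (m - 1), (stirling2 m (m - k) : ℝ) * Real.exp (-(k : ℝ) * c) ≤
      Real.exp ((m : ℝ) ^ 2 * Real.exp (-c) / 2) - 1) ∧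
    (∑ j ∈ Finset.Icc 1 m, (stirling2 m j : ℝ) * Real.exp ((j : ℝ) * c) ≤
      Real.exp ((m : ℝ) * c) * Real.exp ((m : ℝ) ^ 2 * Real.exp (-c) / 2)) := by
  set x : ℝ := (m : ℝ) ^ 2 * Real.exp (-c) / 2 with hxdef
  have hx : 0 ≤ x := by positivity
  -- key real bound
  have key : ∀ k : ℕ, k ≤ m →
      (stirling2 m (m - k) : ℝ) ≤ (m : ℝ) ^ (2 * k) / (2 ^ k * k.factorial) := by
    intro k hk
    have hb := stirling2_bound m (m - k) (Nat.sub_le m k)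
    rw [show m - (m - k) = k by omega] at hb
    have hb' : (2 ^ k * k.factorial * stirling2 m (m - k) : ℝ) ≤ (m : ℝ) ^ (2 * k) := by
      exact_mod_cast hb
    rw [le_div_iff₀ (by positivity)]
    linarith [hb']
  have hxk : ∀ k : ℕ, k ≤ m →
      (stirling2 m (m - k) : ℝ) * Real.exp (-c) ^ k ≤ x ^ k / k.factorial := by
    intro k hk
    have h1 := key k hk
    have h2 : x ^ k / k.factorial
        = (m : ℝ) ^ (2 * k) / (2 ^ k * k.factorial) * Real.exp (-c) ^ k := by
      rw [hxdef, div_pow, mul_pow, pow_mul]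
      field_simp
    rw [h2]
    exact mul_le_mul_of_nonneg_right h1 (by positivity)
  -- sum over range m of x^k/k!
  have hsum : ∑ k ∈ Finset.range m, x ^ k / k.factorial ≤ Real.exp x :=
    Real.sum_le_exp_of_nonneg hx m
  have hins : insert 0 (Finset.Icc 1 (m - 1)) = Finset.range m := by
    ext a
    simp only [Finset.mem_insert, Finset.mem_Icc, Finset.mem_range]
    omega
  have hsplit : ∑ k ∈ Finset.range m, x ^ k / k.factorial
      = 1 + ∑ k ∈ Finset.Icc 1 (m - 1), x ^ k / k.factorial := by
    rw [← hins, Finset.sum_insert (by simp)]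
    simp
  have hfirst : ∑ k ∈ Finset.Icc 1 (m - 1), (stirling2 m (m - k) : ℝ) * Real.exp (-(k : ℝ) * c)
      ≤ Real.exp x - 1 := by
    have h1 : ∑ k ∈ Finset.Icc 1 (m - 1), (stirling2 m (m - k) : ℝ) * Real.exp (-(k : ℝ) * c)
        ≤ ∑ k ∈ Finset.Icc 1 (m - 1), x ^ k / k.factorial := by
      apply Finset.sum_le_sum
      intro k hk
      simp only [Finset.mem_Icc] at hk
      have : Real.exp (-(k : ℝ) * c) = Real.exp (-c) ^ k := by
        rw [← Real.exp_nat_mul]; ring_nf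
      rw [this]
      exact hxk k (by omega)
    linarith [hsplit, hsum, h1]
  refine ⟨hfirst, ?_⟩
  -- second sum
  have hsecond : ∑ j ∈ Finset.Icc 1 m, (stirling2 m j : ℝ) * Real.exp ((j : ℝ) * c)
      ≤ Real.exp ((m : ℝ) * c) * ∑ k ∈ Finset.range m, x ^ k / k.factorial := by
    have hre : ∑ k ∈ Finset.range m, x ^ k / k.factorial
        = ∑ j ∈ Finset.Icc 1 m, x ^ (m - j) / (m - j).factorial := by
      apply Finset.sum_nbij' (fun k => m - k) (fun j => m - j)
      · intro a ha; simp only [Finset.mem_range] at ha; simp only [Finset.mem_Icc]; omega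
      · intro a ha; simp only [Finset.mem_Icc] at ha; simp only [Finset.mem_range]; omega
      · intro a ha; simp only [Finset.mem_range] at ha; omega
      · intro a ha; simp only [Finset.mem_Icc] at ha; omega
      · intro a ha; simp only [Finset.mem_range] at ha
        rw [show m - (m - a) = a by omega]
    rw [hre, Finset.mul_sum]
    apply Finset.sum_le_sum
    intro j hj
    simp only [Finset.mem_Icc] at hj
    have hkey := hxk (m - j) (Nat.sub_le m j)
    rw [show m - (m - j) = j by omega] at hkey
    have hexp : Real.exp ((j : ℝ) * c)
        = Real.exp ((m : ℝ) * c) * Real.exp (-c) ^ (m - j) := by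
      rw [← Real.exp_nat_mul, ← Real.exp_add]
      congr 1
      have : ((m - j : ℕ) : ℝ) = (m : ℝ) - (j : ℝ) := by
        push_cast [hj.2]; ring
      rw [this]; ring
    rw [hexp]
    calc (stirling2 m j : ℝ) * (Real.exp ((m:ℝ)*c) * Real.exp (-c) ^ (m - j))
        = Real.exp ((m:ℝ)*c) * ((stirling2 m j : ℝ) * Real.exp (-c) ^ (m - j)) := by ring
      _ ≤ Real.exp ((m:ℝ)*c) * (x ^ (m - j) / (m - j).factorial) := by
          exact mul_le_mul_of_nonneg_left hkey (Real.exp_nonneg _)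
  calc ∑ j ∈ Finset.Icc 1 m, (stirling2 m j : ℝ) * Real.exp ((j : ℝ) * c)
      ≤ Real.exp ((m : ℝ) * c) * ∑ k ∈ Finset.range m, x ^ k / k.factorial := hsecond
    _ ≤ Real.exp ((m : ℝ) * c) * Real.exp x :=
        mul_le_mul_of_nonneg_left hsum (Real.exp_nonneg _)
end

section
/- Compatibility–CIF comparison: with the cone C_a and the quantities RE_a, K_a, ζ_{a,2} defined below, one has √(RE_a · K_a) ≤ 2·ζ_{a,2}/(1 − a). -/
open scoped BigOperators

/-- The cone C_a = {θ : |θ_{T'}|₁ ≤ ((1+a)/(1−a)) |θ_T|₁}. -/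
def coneT {p : ℕ} (T : Finset (Fin p)) (a : ℝ) : Set (Fin p → ℝ) :=
  {θ | ∑ j ∈ Tᶜ, |θ j| ≤ (1 + a) / (1 - a) * ∑ j ∈ T, |θ j|}

/-- The quadratic form θᵀXᵀXθ = ‖Xθ‖₂². -/
noncomputable def quadF {n p : ℕ} (X : Matrix (Fin n) (Fin p) ℝ) (θ : Fin p → ℝ) : ℝ :=
  ∑ i, (X.mulVec θ i) ^ 2

/-- The restricted eigenvalue RE_a. -/
noncomputable def REa {n p : ℕ} (X : Matrix (Fin n) (Fin p) ℝ) (T : Finset (Fin p))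
    (a : ℝ) : ℝ :=
  sInf ((fun θ => quadF X θ / ∑ j, θ j ^ 2) '' (coneT T a ∩ {θ | θ ≠ 0}))

/-- The compatibility factor K_a. -/
noncomputable def Ka {n p : ℕ} (X : Matrix (Fin n) (Fin p) ℝ) (T : Finset (Fin p))
    (a : ℝ) : ℝ :=
  sInf ((fun θ => (T.card : ℝ) * quadF X θ / (∑ j ∈ T, |θ j|) ^ 2) ''
    (coneT T a ∩ {θ | θ ≠ 0}))

/-- The cone invertibility factor ζ_{a,2}. -/
noncomputable def zeta2 {n p : ℕ} (X : Matrix (Fin n) (Fin p) ℝ) (T : Finset (Fin p))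
    (a : ℝ) : ℝ :=
  sInf ((fun θ => Real.sqrt (T.card : ℝ) * linf (X.transpose.mulVec (X.mulVec θ)) /
      Real.sqrt (∑ j, θ j ^ 2)) '' (coneT T a ∩ {θ | θ ≠ 0}))

/-- The cone invertibility factor ζ_{a,∞}. -/
noncomputable def zetaInf {n p : ℕ} (X : Matrix (Fin n) (Fin p) ℝ) (T : Finset (Fin p))
    (a : ℝ) : ℝ :=
  sInf ((fun θ => linf (X.transpose.mulVec (X.mulVec θ)) / linf θ) ''
    (coneT T a ∩ {θ | θ ≠ 0}))

/-- Compatibility–CIF comparison: √(RE_a K_a) ≤ 2 ζ_{a,2}/(1 − a). -/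
theorem stmt15 {n p : ℕ} (hn : 0 < n) (hp : 0 < p)
    (X : Matrix (Fin n) (Fin p) ℝ)
    (T : Finset (Fin p)) (hT : T.Nonempty)
    (a : ℝ) (ha : a ∈ Set.Ioo (0 : ℝ) 1) :
    Real.sqrt (REa X T a * Ka X T a) ≤ 2 * zeta2 X T a / (1 - a) := by
  obtain ⟨ha0, ha1⟩ := ha
  have h1a : 0 < 1 - a := by linarith
  set S := coneT T a ∩ {θ : Fin p → ℝ | θ ≠ 0} with hS
  obtain ⟨t, ht⟩ := hT
  have hSne : S.Nonempty := by
    refine ⟨fun j => if j = t then 1 else 0, ?_, ?_⟩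
    · show ∑ j ∈ Tᶜ, |(if j = t then (1:ℝ) else 0)| ≤
        (1 + a) / (1 - a) * ∑ j ∈ T, |(if j = t then (1:ℝ) else 0)|
      have h1 : ∑ j ∈ Tᶜ, |(if j = t then (1:ℝ) else 0)| = 0 := by
        refine Finset.sum_eq_zero fun j hj => ?_
        rw [if_neg, abs_zero]
        intro h; subst h; exact (Finset.mem_compl.mp hj) ht
      rw [h1]
      exact mul_nonneg (div_nonneg (by linarith) (by linarith))
        (Finset.sum_nonneg fun j _ => abs_nonneg _)
    · intro h
      have := congrFun h t
      simp at this
  -- lower bounds for the sInf's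
  have hREnn : 0 ≤ REa X T a := by
    apply Real.sInf_nonneg
    rintro y ⟨θ, _, rfl⟩
    exact div_nonneg (Finset.sum_nonneg fun i _ => sq_nonneg _)
      (Finset.sum_nonneg fun j _ => sq_nonneg _)
  have hKnn : 0 ≤ Ka X T a := by
    apply Real.sInf_nonneg
    rintro y ⟨θ, _, rfl⟩
    exact div_nonneg (mul_nonneg (Nat.cast_nonneg _)
      (Finset.sum_nonneg fun i _ => sq_nonneg _)) (sq_nonneg _)
  have key : ∀ θ ∈ S, Real.sqrt (REa X T a * Ka X T a) * (1 - a) / 2 ≤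
      Real.sqrt (T.card : ℝ) * linf (X.transpose.mulVec (X.mulVec θ)) /
        Real.sqrt (∑ j, θ j ^ 2) := by
    rintro θ ⟨hθc, hθ0⟩
    set w := X.transpose.mulVec (X.mulVec θ) with hw
    set L := linf w with hLdef
    have hL : ∀ j, |w j| ≤ L := fun j =>
      le_ciSup (f := fun j => |w j|) (Set.Finite.bddAbove (Set.finite_range _)) j
    have hL0 : 0 ≤ L := Real.iSup_nonneg fun j => abs_nonneg _
    set s2 := ∑ j, θ j ^ 2 with hs2def
    set s1 := ∑ j ∈ T, |θ j| with hs1def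
    have hs2 : 0 < s2 := by
      have : ∃ j, θ j ≠ 0 := by
        by_contra h
        push_neg at h
        exact hθ0 (funext h)
      obtain ⟨j, hj⟩ := this
      refine Finset.sum_pos' (fun i _ => sq_nonneg _) ⟨j, Finset.mem_univ j, ?_⟩
      positivity
    have hs1 : 0 < s1 := by
      rcases lt_or_eq_of_le (Finset.sum_nonneg fun j _ => abs_nonneg (θ j)) with h | h
      · exact h
      · exfalso
        have hTz : ∀ j ∈ T, θ j = 0 := by
          intro j hj
          have := (Finset.sum_eq_zero_iff_of_nonneg (fun i _ => abs_nonneg (θ i))).mp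
            h.symm j hj
          exact abs_eq_zero.mp this
        have hcc : ∑ j ∈ Tᶜ, |θ j| ≤ 0 := by
          have h2 : ∑ j ∈ Tᶜ, |θ j| ≤ (1 + a) / (1 - a) * ∑ j ∈ T, |θ j| := hθc
          rw [← h] at h2
          simpa using h2
        have hCz : ∀ j ∈ Tᶜ, θ j = 0 := by
          intro j hj
          have h0 : ∑ j ∈ Tᶜ, |θ j| = 0 :=
            le_antisymm hcc (Finset.sum_nonneg fun i _ => abs_nonneg _)
          exact abs_eq_zero.mp
            ((Finset.sum_eq_zero_iff_of_nonneg (fun i _ => abs_nonneg (θ i))).mp h0 j hj)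
        apply hθ0
        funext j
        by_cases hj : j ∈ T
        · exact hTz j hj
        · exact hCz j (Finset.mem_compl.mpr hj)
    have hquad : quadF X θ = dotProduct θ w := by
      rw [hw, Matrix.dotProduct_mulVec, Matrix.vecMul_transpose]
      unfold quadF
      simp [dotProduct, pow_two]
    have hq0 : 0 ≤ quadF X θ := Finset.sum_nonneg fun i _ => sq_nonneg _
    have hqb : quadF X θ ≤ (∑ j, |θ j|) * L := by
      rw [hquad]
      calc dotProduct θ w ≤ ∑ j, |θ j * w j| :=
            Finset.sum_le_sum fun j _ => le_abs_self _
        _ ≤ ∑ j, |θ j| * L := by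
            refine Finset.sum_le_sum fun j _ => ?_
            rw [abs_mul]
            exact mul_le_mul_of_nonneg_left (hL j) (abs_nonneg _)
        _ = (∑ j, |θ j|) * L := (Finset.sum_mul _ _ _).symm
    have hsum : ∑ j, |θ j| ≤ 2 / (1 - a) * s1 := by
      have hsplit : ∑ j ∈ T, |θ j| + ∑ j ∈ Tᶜ, |θ j| = ∑ j, |θ j| :=
        Finset.sum_add_sum_compl T _
      have hcone : ∑ j ∈ Tᶜ, |θ j| ≤ (1 + a) / (1 - a) * s1 := hθc
      have : (1:ℝ) + (1 + a) / (1 - a) = 2 / (1 - a) := by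
        field_simp
        ring
      calc ∑ j, |θ j| = s1 + ∑ j ∈ Tᶜ, |θ j| := by rw [← hsplit]
        _ ≤ s1 + (1 + a) / (1 - a) * s1 := by linarith
        _ = 2 / (1 - a) * s1 := by rw [← this]; ring
    have hqb2 : quadF X θ ≤ 2 / (1 - a) * s1 * L :=
      hqb.trans (by
        have := mul_le_mul_of_nonneg_right hsum hL0
        linarith)
    set m := (T.card : ℝ) with hm
    have hm0 : 0 ≤ m := Nat.cast_nonneg _
    have hRE : REa X T a ≤ quadF X θ / s2 := by
      refine csInf_le ⟨0, ?_⟩ ⟨θ, ⟨hθc, hθ0⟩, rfl⟩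
      rintro y ⟨θ', _, rfl⟩
      exact div_nonneg (Finset.sum_nonneg fun i _ => sq_nonneg _)
        (Finset.sum_nonneg fun j _ => sq_nonneg _)
    have hKa : Ka X T a ≤ m * quadF X θ / s1 ^ 2 := by
      refine csInf_le ⟨0, ?_⟩ ⟨θ, ⟨hθc, hθ0⟩, rfl⟩
      rintro y ⟨θ', _, rfl⟩
      exact div_nonneg (mul_nonneg (Nat.cast_nonneg _)
        (Finset.sum_nonneg fun i _ => sq_nonneg _)) (sq_nonneg _)
    have hprod : REa X T a * Ka X T a ≤ (quadF X θ / s2) * (m * quadF X θ / s1 ^ 2) :=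
      mul_le_mul hRE hKa hKnn (div_nonneg hq0 hs2.le)
    have hval0 : 0 ≤ 2 / (1 - a) * (Real.sqrt m * L / Real.sqrt s2) := by positivity
    have hsq : (quadF X θ / s2) * (m * quadF X θ / s1 ^ 2) ≤
        (2 / (1 - a) * (Real.sqrt m * L / Real.sqrt s2)) ^ 2 := by
      have hrhs : (2 / (1 - a) * (Real.sqrt m * L / Real.sqrt s2)) ^ 2 =
          (2 / (1 - a)) ^ 2 * (m * L ^ 2 / s2) := by
        rw [mul_pow, div_pow (Real.sqrt m * L), mul_pow, Real.sq_sqrt hm0,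
          Real.sq_sqrt hs2.le]
        all_goals ring
      rw [hrhs]
      have hq2 : quadF X θ ^ 2 ≤ (2 / (1 - a) * s1 * L) ^ 2 :=
        pow_le_pow_left₀ hq0 hqb2 2
      have hlhs : (quadF X θ / s2) * (m * quadF X θ / s1 ^ 2) =
          m * quadF X θ ^ 2 / (s2 * s1 ^ 2) := by
        field_simp
        all_goals ring
      rw [hlhs]
      rw [div_le_iff₀ (by positivity)]
      have : m * quadF X θ ^ 2 ≤ m * (2 / (1 - a) * s1 * L) ^ 2 :=
        mul_le_mul_of_nonneg_left hq2 hm0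
      calc m * quadF X θ ^ 2 ≤ m * (2 / (1 - a) * s1 * L) ^ 2 := this
        _ = (2 / (1 - a)) ^ 2 * (m * L ^ 2 / s2) * (s2 * s1 ^ 2) := by
            field_simp
    have hsqrt : Real.sqrt (REa X T a * Ka X T a) ≤
        2 / (1 - a) * (Real.sqrt m * L / Real.sqrt s2) := by
      calc Real.sqrt (REa X T a * Ka X T a)
          ≤ Real.sqrt ((2 / (1 - a) * (Real.sqrt m * L / Real.sqrt s2)) ^ 2) :=
            Real.sqrt_le_sqrt (hprod.trans hsq)
        _ = 2 / (1 - a) * (Real.sqrt m * L / Real.sqrt s2) :=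
            Real.sqrt_sq hval0
    have := mul_le_mul_of_nonneg_right hsqrt (le_of_lt (by positivity : (0:ℝ) < (1 - a) / 2))
    calc Real.sqrt (REa X T a * Ka X T a) * (1 - a) / 2
        = Real.sqrt (REa X T a * Ka X T a) * ((1 - a) / 2) := by ring
      _ ≤ 2 / (1 - a) * (Real.sqrt m * L / Real.sqrt s2) * ((1 - a) / 2) := this
      _ = Real.sqrt m * L / Real.sqrt s2 := by
          field_simp
          all_goals ring
  have hz : Real.sqrt (REa X T a * Ka X T a) * (1 - a) / 2 ≤ zeta2 X T a := by
    apply le_csInf (hSne.image _)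
    rintro z ⟨θ, hθ, rfl⟩
    exact key θ hθ
  calc Real.sqrt (REa X T a * Ka X T a)
      = Real.sqrt (REa X T a * Ka X T a) * (1 - a) / 2 * (2 / (1 - a)) := by
        field_simp
    _ ≤ zeta2 X T a * (2 / (1 - a)) :=
        mul_le_mul_of_nonneg_right hz (by positivity)
    _ = 2 * zeta2 X T a / (1 - a) := by ring
end

section
/- CIF dominates the restricted eigenvalue bound: with the cone C_a and the quantities RE_a, K_a, ζ_{a,2}, ζ_{a,∞} defined below, one has ζ_{a,∞} ≥ ζ_{a,2}/√|T|, and consequently ζ_{a,∞} ≥ (1−a)·√(RE_a·K_a)/(2√|T|) ≥ (1−a)·RE_a/(2√|T|). -/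
open scoped BigOperators

lemma abs_le_linf {p : ℕ} (v : Fin p → ℝ) (j : Fin p) : |v j| ≤ linf v :=
  le_ciSup (Set.Finite.bddAbove (Set.finite_range fun k => |v k|)) j

lemma linf_nonneg {p : ℕ} [Nonempty (Fin p)] (v : Fin p → ℝ) : 0 ≤ linf v :=
  le_trans (abs_nonneg _) (abs_le_linf v (Classical.arbitrary _))

lemma linf_le_l2 {p : ℕ} [Nonempty (Fin p)] (v : Fin p → ℝ) :
    linf v ≤ Real.sqrt (∑ j, v j ^ 2) := by
  apply ciSup_le
  intro j
  rw [← Real.sqrt_sq_eq_abs]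
  apply Real.sqrt_le_sqrt
  exact Finset.single_le_sum (f := fun j => v j ^ 2) (fun i _ => sq_nonneg _)
    (Finset.mem_univ j)

lemma linf_pos {p : ℕ} [Nonempty (Fin p)] {v : Fin p → ℝ} (hv : v ≠ 0) : 0 < linf v := by
  obtain ⟨j, hj⟩ := Function.ne_iff.mp hv
  exact lt_of_lt_of_le (abs_pos.mpr hj) (abs_le_linf v j)

lemma quad_eq {n p : ℕ} (X : Matrix (Fin n) (Fin p) ℝ) (θ : Fin p → ℝ) :
    quadF X θ = ∑ j, θ j * X.transpose.mulVec (X.mulVec θ) j := by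
  have h : ∑ j, θ j * X.transpose.mulVec (X.mulVec θ) j
      = dotProduct θ (X.transpose.mulVec (X.mulVec θ)) := rfl
  rw [h, Matrix.mulVec_transpose, dotProduct_comm, ← Matrix.dotProduct_mulVec]
  simp [quadF, dotProduct, sq]

/-- CIF dominates the restricted eigenvalue bound: ζ_{a,∞} ≥ ζ_{a,2}/√|T|, and
consequently ζ_{a,∞} ≥ (1−a)√(RE_a K_a)/(2√|T|) ≥ (1−a) RE_a/(2√|T|). -/
theorem stmt17 {n p : ℕ} (hn : 0 < n) (hp : 0 < p)
    (X : Matrix (Fin n) (Fin p) ℝ)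
    (T : Finset (Fin p)) (hT : T.Nonempty)
    (a : ℝ) (ha : a ∈ Set.Ioo (0 : ℝ) 1) :
    zeta2 X T a / Real.sqrt (T.card : ℝ) ≤ zetaInf X T a ∧
    (1 - a) * Real.sqrt (REa X T a * Ka X T a) / (2 * Real.sqrt (T.card : ℝ)) ≤
      zetaInf X T a ∧
    (1 - a) * REa X T a / (2 * Real.sqrt (T.card : ℝ)) ≤
      (1 - a) * Real.sqrt (REa X T a * Ka X T a) / (2 * Real.sqrt (T.card : ℝ)) := by
  obtain ⟨ha0, ha1⟩ := ha
  have h1a : (0:ℝ) < 1 - a := by linarith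
  have hp' : Nonempty (Fin p) := ⟨⟨0, hp⟩⟩
  have hcard : (0:ℝ) < T.card := by exact_mod_cast hT.card_pos
  have hs : 0 < Real.sqrt (T.card : ℝ) := Real.sqrt_pos.mpr hcard
  obtain ⟨j0, hj0⟩ := hT
  -- the feasible set is nonempty
  have hSne : (coneT T a ∩ {θ : Fin p → ℝ | θ ≠ 0}).Nonempty := by
    refine ⟨Pi.single j0 1, ?_, ?_⟩
    · show ∑ j ∈ Tᶜ, |Pi.single j0 (1:ℝ) j| ≤ _
      have h1 : ∑ j ∈ Tᶜ, |Pi.single j0 (1:ℝ) j| = 0 := by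
        apply Finset.sum_eq_zero
        intro j hj
        have hne : j ≠ j0 := by
          rintro rfl
          exact (Finset.mem_compl.mp hj) hj0
        simp [Pi.single_eq_of_ne hne]
      rw [h1]
      exact mul_nonneg (div_nonneg (by linarith) (by linarith))
        (Finset.sum_nonneg fun _ _ => abs_nonneg _)
    · intro h
      simpa using congrFun h j0
  -- nonnegativity / boundedness
  have hQnn : ∀ θ : Fin p → ℝ, 0 ≤ quadF X θ :=
    fun θ => Finset.sum_nonneg fun _ _ => sq_nonneg _
  have bdd2 : BddBelow ((fun θ => Real.sqrt (T.card : ℝ) *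
      linf (X.transpose.mulVec (X.mulVec θ)) / Real.sqrt (∑ j, θ j ^ 2)) ''
      (coneT T a ∩ {θ | θ ≠ 0})) := by
    refine ⟨0, ?_⟩
    rintro x ⟨θ, _, rfl⟩
    exact div_nonneg (mul_nonneg (Real.sqrt_nonneg _) (linf_nonneg _)) (Real.sqrt_nonneg _)
  have bddRE : BddBelow ((fun θ => quadF X θ / ∑ j, θ j ^ 2) ''
      (coneT T a ∩ {θ | θ ≠ 0})) := by
    refine ⟨0, ?_⟩
    rintro x ⟨θ, _, rfl⟩
    exact div_nonneg (hQnn θ) (Finset.sum_nonneg fun _ _ => sq_nonneg _)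
  have bddK : BddBelow ((fun θ => (T.card : ℝ) * quadF X θ / (∑ j ∈ T, |θ j|) ^ 2) ''
      (coneT T a ∩ {θ | θ ≠ 0})) := by
    refine ⟨0, ?_⟩
    rintro x ⟨θ, _, rfl⟩
    exact div_nonneg (mul_nonneg hcard.le (hQnn θ)) (sq_nonneg _)
  have hRE0 : 0 ≤ REa X T a := by
    apply le_csInf (hSne.image _)
    rintro x ⟨θ, _, rfl⟩
    exact div_nonneg (hQnn θ) (Finset.sum_nonneg fun _ _ => sq_nonneg _)
  have hK0 : 0 ≤ Ka X T a := by
    apply le_csInf (hSne.image _)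
    rintro x ⟨θ, _, rfl⟩
    exact div_nonneg (mul_nonneg hcard.le (hQnn θ)) (sq_nonneg _)
  -- basic positivity facts for feasible θ
  have hfacts : ∀ θ : Fin p → ℝ, θ ∈ coneT T a ∩ {θ | θ ≠ 0} →
      0 < (∑ j, θ j ^ 2) ∧ 0 < ∑ j ∈ T, |θ j| := by
    rintro θ ⟨hc, hne⟩
    obtain ⟨j, hj⟩ := Function.ne_iff.mp hne
    have hsq2 : 0 < ∑ j, θ j ^ 2 :=
      Finset.sum_pos' (fun i _ => sq_nonneg _)
        ⟨j, Finset.mem_univ j, by nlinarith [abs_pos.mpr hj, sq_abs (θ j)]⟩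
    have hs2nn : 0 ≤ ∑ j ∈ Tᶜ, |θ j| := Finset.sum_nonneg fun _ _ => abs_nonneg _
    have hs1nn : 0 ≤ ∑ j ∈ T, |θ j| := Finset.sum_nonneg fun _ _ => abs_nonneg _
    have htotpos : 0 < ∑ j, |θ j| :=
      Finset.sum_pos' (fun i _ => abs_nonneg _) ⟨j, Finset.mem_univ j, abs_pos.mpr hj⟩
    have hsplit : (∑ j ∈ T, |θ j|) + ∑ j ∈ Tᶜ, |θ j| = ∑ j, |θ j| :=
      Finset.sum_add_sum_compl T _
    refine ⟨hsq2, ?_⟩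
    rcases hs1nn.lt_or_eq with h | h
    · exact h
    · exfalso
      have hc' : ∑ j ∈ Tᶜ, |θ j| ≤ (1 + a) / (1 - a) * ∑ j ∈ T, |θ j| := hc
      rw [← h] at hc'
      simp at hc'
      linarith
  -- part 1
  have part1 : zeta2 X T a / Real.sqrt (T.card : ℝ) ≤ zetaInf X T a := by
    apply le_csInf (hSne.image _)
    rintro b ⟨θ, hθ, rfl⟩
    obtain ⟨hsq2, hs1⟩ := hfacts θ hθ
    have hnrm : 0 < Real.sqrt (∑ j, θ j ^ 2) := Real.sqrt_pos.mpr hsq2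
    have hL : 0 ≤ linf (X.transpose.mulVec (X.mulVec θ)) := linf_nonneg _
    have h2 : zeta2 X T a ≤ Real.sqrt (T.card : ℝ) *
        linf (X.transpose.mulVec (X.mulVec θ)) / Real.sqrt (∑ j, θ j ^ 2) :=
      csInf_le bdd2 ⟨θ, hθ, rfl⟩
    calc zeta2 X T a / Real.sqrt (T.card : ℝ)
        ≤ (Real.sqrt (T.card : ℝ) * linf (X.transpose.mulVec (X.mulVec θ)) /
            Real.sqrt (∑ j, θ j ^ 2)) / Real.sqrt (T.card : ℝ) :=
          div_le_div_of_nonneg_right h2 hs.le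
      _ = linf (X.transpose.mulVec (X.mulVec θ)) / Real.sqrt (∑ j, θ j ^ 2) := by
          rw [mul_div_assoc, mul_div_cancel_left₀ _ (ne_of_gt hs)]
      _ ≤ linf (X.transpose.mulVec (X.mulVec θ)) / linf θ :=
          div_le_div_of_nonneg_left hL (linf_pos hθ.2) (linf_le_l2 θ)
  -- zeta2 lower bound
  have hz2 : (1 - a) * Real.sqrt (REa X T a * Ka X T a) / 2 ≤ zeta2 X T a := by
    apply le_csInf (hSne.image _)
    rintro b ⟨θ, hθ, rfl⟩
    obtain ⟨hsq2, hs1⟩ := hfacts θ hθ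
    have hnrm : 0 < Real.sqrt (∑ j, θ j ^ 2) := Real.sqrt_pos.mpr hsq2
    set L := linf (X.transpose.mulVec (X.mulVec θ)) with hLdef
    set Q := quadF X θ with hQdef
    set s1 := ∑ j ∈ T, |θ j| with hs1def
    set sq2 := ∑ j, θ j ^ 2 with hsq2def
    have hL : 0 ≤ L := linf_nonneg _
    have hQ : 0 ≤ Q := hQnn θ
    -- Q ≤ total * L
    have hQtot : Q ≤ (∑ j, |θ j|) * L := by
      rw [hQdef, quad_eq]
      calc ∑ j, θ j * X.transpose.mulVec (X.mulVec θ) j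
          ≤ ∑ j, |θ j| * L := by
            apply Finset.sum_le_sum
            intro j _
            calc θ j * X.transpose.mulVec (X.mulVec θ) j
                ≤ |θ j * X.transpose.mulVec (X.mulVec θ) j| := le_abs_self _
              _ = |θ j| * |X.transpose.mulVec (X.mulVec θ) j| := abs_mul _ _
              _ ≤ |θ j| * L := by
                  exact mul_le_mul_of_nonneg_left (abs_le_linf _ j) (abs_nonneg _)
        _ = (∑ j, |θ j|) * L := by rw [Finset.sum_mul]
    have htot : ∑ j, |θ j| ≤ 2 / (1 - a) * s1 := by
      have hc' : ∑ j ∈ Tᶜ, |θ j| ≤ (1 + a) / (1 - a) * s1 := hθ.1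
      have hsplit : s1 + ∑ j ∈ Tᶜ, |θ j| = ∑ j, |θ j| :=
        Finset.sum_add_sum_compl T _
      have heq : s1 + (1 + a) / (1 - a) * s1 = 2 / (1 - a) * s1 := by
        field_simp
        ring
      linarith
    have hQle : (1 - a) * Q ≤ 2 * L * s1 := by
      have h5 : Q ≤ 2 / (1 - a) * s1 * L :=
        hQtot.trans (mul_le_mul_of_nonneg_right htot hL)
      have h6 : (1 - a) * Q ≤ (1 - a) * (2 / (1 - a) * s1 * L) :=
        mul_le_mul_of_nonneg_left h5 h1a.le
      have h7 : (1 - a) * (2 / (1 - a) * s1 * L) = 2 * L * s1 := by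
        field_simp
      linarith
    have hRE : REa X T a ≤ Q / sq2 := csInf_le bddRE ⟨θ, hθ, rfl⟩
    have hK : Ka X T a ≤ (T.card : ℝ) * Q / s1 ^ 2 := csInf_le bddK ⟨θ, hθ, rfl⟩
    have hsr : Real.sqrt (REa X T a * Ka X T a) ≤
        Real.sqrt (T.card : ℝ) * Q / (Real.sqrt sq2 * s1) := by
      calc Real.sqrt (REa X T a * Ka X T a)
          ≤ Real.sqrt ((Q / sq2) * ((T.card : ℝ) * Q / s1 ^ 2)) :=
            Real.sqrt_le_sqrt (mul_le_mul hRE hK hK0 (div_nonneg hQ hsq2.le))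
        _ = Real.sqrt ((T.card : ℝ) * Q ^ 2 / (sq2 * s1 ^ 2)) := by
            rw [show (Q / sq2) * ((T.card : ℝ) * Q / s1 ^ 2)
              = (T.card : ℝ) * Q ^ 2 / (sq2 * s1 ^ 2) by field_simp]
        _ = Real.sqrt (T.card : ℝ) * Q / (Real.sqrt sq2 * s1) := by
            rw [Real.sqrt_div (by positivity), Real.sqrt_mul hcard.le,
              Real.sqrt_sq hQ, Real.sqrt_mul hsq2.le, Real.sqrt_sq hs1.le]
    calc (1 - a) * Real.sqrt (REa X T a * Ka X T a) / 2
        ≤ (1 - a) * (Real.sqrt (T.card : ℝ) * Q / (Real.sqrt sq2 * s1)) / 2 :=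
          div_le_div_of_nonneg_right (mul_le_mul_of_nonneg_left hsr h1a.le) (by norm_num)
      _ = Real.sqrt (T.card : ℝ) * ((1 - a) * Q) / (2 * (Real.sqrt sq2 * s1)) := by
          ring
      _ ≤ Real.sqrt (T.card : ℝ) * (2 * L * s1) / (2 * (Real.sqrt sq2 * s1)) := by
          apply div_le_div_of_nonneg_right _ (by positivity)
          exact mul_le_mul_of_nonneg_left hQle (Real.sqrt_nonneg _)
      _ = Real.sqrt (T.card : ℝ) * L / Real.sqrt sq2 := by
          field_simp
  -- part 2
  have part2 : (1 - a) * Real.sqrt (REa X T a * Ka X T a) /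
      (2 * Real.sqrt (T.card : ℝ)) ≤ zetaInf X T a := by
    have h1 : (1 - a) * Real.sqrt (REa X T a * Ka X T a) /
        (2 * Real.sqrt (T.card : ℝ))
        = ((1 - a) * Real.sqrt (REa X T a * Ka X T a) / 2) /
          Real.sqrt (T.card : ℝ) := by ring
    rw [h1]
    exact le_trans (div_le_div_of_nonneg_right hz2 hs.le) part1
  -- part 3 : RE ≤ K hence RE ≤ sqrt (RE * K)
  have hREK : REa X T a ≤ Ka X T a := by
    apply le_csInf (hSne.image _)
    rintro b ⟨θ, hθ, rfl⟩
    obtain ⟨hsq2, hs1⟩ := hfacts θ hθ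
    have hQ : 0 ≤ quadF X θ := hQnn θ
    have hRE : REa X T a ≤ quadF X θ / ∑ j, θ j ^ 2 := csInf_le bddRE ⟨θ, hθ, rfl⟩
    refine hRE.trans ?_
    rw [div_le_div_iff₀ hsq2 (by positivity : (0:ℝ) < (∑ j ∈ T, |θ j|) ^ 2)]
    have hcs : (∑ j ∈ T, |θ j|) ^ 2 ≤ (T.card : ℝ) * ∑ j, θ j ^ 2 := by
      have h := Finset.sum_mul_sq_le_sq_mul_sq T (fun _ => (1:ℝ)) (fun j => |θ j|)
      simp only [one_mul, one_pow, Finset.sum_const, nsmul_eq_mul, mul_one, sq_abs] at h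
      calc (∑ j ∈ T, |θ j|) ^ 2 ≤ (T.card : ℝ) * ∑ j ∈ T, θ j ^ 2 := h
        _ ≤ (T.card : ℝ) * ∑ j, θ j ^ 2 := by
            apply mul_le_mul_of_nonneg_left _ hcard.le
            exact Finset.sum_le_sum_of_subset_of_nonneg (Finset.subset_univ T)
              (fun i _ _ => sq_nonneg _)
    nlinarith [mul_le_mul_of_nonneg_left hcs hQ]
  have hREsqrt : REa X T a ≤ Real.sqrt (REa X T a * Ka X T a) := by
    have h1 : REa X T a = Real.sqrt (REa X T a ^ 2) := (Real.sqrt_sq hRE0).symm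
    rw [h1]
    apply Real.sqrt_le_sqrt
    nlinarith
  refine ⟨part1, part2, ?_⟩
  apply div_le_div_of_nonneg_right _ (by positivity)
  exact mul_le_mul_of_nonneg_left hREsqrt h1a.le
end
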